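/- For every nonempty S ⊆ {1, …, n}: (a) F(S) is upward closed in [0,1], i.e., if a ∈ F(S) and a ≤ a' ≤ 1 then a' ∈ F(S); (b) if F(S) ≠ ∅ then the infimum C(S) = inf F(S) belongs to F(S). Moreover, there exists a connected division of [0,1] with egalitarian welfare at least B if and only if F({1, …, n}) ≠ ∅. (Properties underlying the FPT-FPTAS for egalitarian welfare, Theorem 5.) -/

import Mathlib

/-!
`F(S)` is closed. Given feasible points `a k → p`, pigeonhole on the finitely many assignments
and compactness of `[0,1]^(|S|+1)` give a subsequence with a fixed assignment and converging cut
points. For a finite atomless measure, `μ (s, t) = μ [s, t]` and `[s, t]` is the decreasing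
intersection of the intervals `[s - r, t + r]`, so `(s, t) ↦ μ (s, t)` is upper semicontinuous and
the limiting cuts still give every player at least `B`. Being closed and bounded below, `F(S)`
contains its infimum. Upward closure comes from stretching the last piece, and a division of the
whole cake with egalitarian welfare at least `B` is exactly a witness of `1 ∈ F({1, …, n})`.
-/

open MeasureTheory Set

/-- `Feas n v B S` is the set `F(S)`: points `a ∈ [0,1]` such that `[0,a]` can be
partitioned into `S.card` consecutive intervals assigned bijectively to the
players of `S`, each player valuing her own interval at least `B`. -/
def Feas (n : ℕ) (v : Fin n → Measure ℝ) (B : ℝ) (S : Finset (Fin n)) : Set ℝ :=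
  {a | a ∈ Icc (0 : ℝ) 1 ∧
    ∃ (c : Fin (S.card + 1) → ℝ) (σ : Fin S.card ≃ {i // i ∈ S}),
      Monotone c ∧ c 0 = 0 ∧ c (Fin.last S.card) = a ∧
      ∀ b : Fin S.card,
        ENNReal.ofReal B ≤ v (σ b) (Ioo (c b.castSucc) (c b.succ))}

open Filter Topology ENNReal

theorem exists_subseq_const_tendsto {α X : Type*} [Finite α] [TopologicalSpace X]
    [FirstCountableTopology X] {K : Set X} (hK : IsCompact K) (f : ℕ → α) {g : ℕ → X}
    (hg : ∀ k, g k ∈ K) :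
    ∃ a, ∃ x ∈ K, ∃ φ : ℕ → ℕ, StrictMono φ ∧ (∀ k, f (φ k) = a) ∧
      Tendsto (g ∘ φ) atTop (𝓝 x) := by
  obtain ⟨a, ha⟩ := Finite.exists_infinite_fiber f
  obtain ⟨φ, hφ, hfφ⟩ := extraction_of_frequently_atTop (P := fun k => f k = a)
    (Nat.frequently_atTop_iff_infinite.2 (Set.infinite_coe_iff.1 ha))
  obtain ⟨x, hx, ψ, hψ, hlim⟩ := hK.tendsto_subseq fun k => hg (φ k)
  exact ⟨a, x, hx, φ ∘ ψ, hφ.comp hψ, fun k => hfφ (ψ k), hlim⟩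

theorem iInter_Icc_sub_add_eq_Icc (X Y : ℝ) : ⋂ r > 0, Icc (X - r) (Y + r) = Icc X Y := by
  ext z
  simp only [mem_iInter, mem_Icc]
  refine ⟨fun h => ⟨le_of_forall_pos_le_add fun r hr => ?_,
    le_of_forall_pos_le_add fun r hr => (h r hr).2⟩, fun ⟨hX, hY⟩ r hr => ⟨?_, ?_⟩⟩
  · linarith [(h r hr).1]
  · linarith
  · linarith

theorem le_measure_Ioo_of_tendsto {ι : Type*} {μ : Measure ℝ} [IsFiniteMeasure μ]
    [NullSingletonClass μ] {l : Filter ι} [l.NeBot] {x y : ι → ℝ} {X Y : ℝ} (hx : Tendsto x l (𝓝 X))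
    (hy : Tendsto y l (𝓝 Y)) {m : ℝ≥0∞} (h : ∀ᶠ k in l, m ≤ μ (Ioo (x k) (y k))) :
    m ≤ μ (Ioo X Y) := by
  rw [measure_congr Ioo_ae_eq_Icc]
  have hlim : Tendsto (fun r => μ (Icc (X - r) (Y + r))) (𝓝[>] 0) (𝓝 (μ (Icc X Y))) := by
    rw [← iInter_Icc_sub_add_eq_Icc]
    exact tendsto_measure_biInter_gt (fun r _ => measurableSet_Icc.nullMeasurableSet)
      (fun r s _ hrs => Icc_subset_Icc (by linarith) (by linarith)) ⟨1, one_pos, measure_ne_top _ _⟩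
  refine ge_of_tendsto hlim ?_
  filter_upwards [self_mem_nhdsWithin] with r (hr : 0 < r)
  obtain ⟨k, hk, hxk, hyk⟩ := (h.and ((hx.eventually (lt_mem_nhds (sub_lt_self X hr))).and
    (hy.eventually (gt_mem_nhds (lt_add_of_pos_right Y hr))))).exists
  exact hk.trans (measure_mono (Ioo_subset_Icc_self.trans (Icc_subset_Icc hxk.le hyk.le)))

section Feas

variable {n : ℕ} {v : Fin n → Measure ℝ} {B : ℝ} {S : Finset (Fin n)}

theorem mem_feas_of_le (hS : S.Nonempty) {a a' : ℝ} (ha : a ∈ Feas n v B S) (h : a ≤ a')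
    (h' : a' ≤ 1) : a' ∈ Feas n v B S := by
  obtain ⟨⟨ha0, -⟩, c, σ, hmono, hc0, hclast, hval⟩ := ha
  have hlast : (0 : Fin (S.card + 1)) ≠ Fin.last S.card := by
    simp [Fin.ext_iff, eq_comm, Finset.card_ne_zero.2 hS]
  set c' := Function.update c (Fin.last S.card) a'
  have hle : ∀ j, c j ≤ c' j := fun j => by
    rcases eq_or_ne j (Fin.last _) with rfl | hj
    · simpa [c', hclast] using h
    · simp [c', hj]
  have hmono' : Monotone c' := fun i j hij => by
    rcases eq_or_ne j (Fin.last _) with rfl | hj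
    · rcases eq_or_ne i (Fin.last _) with rfl | hi
      · rfl
      · simpa [c', hi] using (hmono (Fin.le_last i)).trans (hclast ▸ h)
    · have hi : i ≠ Fin.last _ := (hij.trans_lt (Fin.lt_last_iff_ne_last.2 hj)).ne
      simpa [c', hi, hj] using hmono hij
  refine ⟨⟨ha0.trans h, h'⟩, c', σ, hmono', ?_, by simp [c'], fun b => ?_⟩
  · simpa [c', hlast] using hc0
  · have hb : c' b.castSucc = c b.castSucc := Function.update_of_ne (Fin.castSucc_lt_last b).ne _ _
    exact (hval b).trans (measure_mono (Ioo_subset_Ioo hb.le (hle _)))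

theorem isClosed_feas (hatomless : ∀ i, NullSingletonClass (v i)) (hfin : ∀ i, v i (Icc 0 1) ≠ ∞) :
    IsClosed (Feas n v B S) := by
  refine IsSeqClosed.isClosed fun a p ha hp => ?_
  choose c σ hmono hc0 hclast hval using fun k => (ha k).2
  have hcut : ∀ k j, c k j ∈ Icc (0 : ℝ) 1 := fun k j =>
    ⟨hc0 k ▸ hmono k (Fin.zero_le j), (hclast k ▸ hmono k (Fin.le_last j)).trans (ha k).1.2⟩
  obtain ⟨τ, c₀, -, φ, hφ, hστ, hlim⟩ :=
    exists_subseq_const_tendsto (isCompact_univ_pi fun _ => isCompact_Icc) σ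
      fun k => mem_univ_pi.2 (hcut k)
  have hlim_at : ∀ j, Tendsto (fun k => c (φ k) j) atTop (𝓝 (c₀ j)) := tendsto_pi_nhds.1 hlim
  refine ⟨isClosed_Icc.mem_of_tendsto hp (Eventually.of_forall fun k => (ha k).1), c₀, τ,
    fun i j hij => le_of_tendsto_of_tendsto' (hlim_at i) (hlim_at j) fun k => hmono _ hij,
    tendsto_nhds_unique (hlim_at 0) ?_, tendsto_nhds_unique (hlim_at _) ?_, fun b => ?_⟩
  · simpa only [hc0] using tendsto_const_nhds
  · simpa only [hclast, Function.comp_def] using hp.comp hφ.tendsto_atTop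
  · -- restricting to `[0, 1]`, which contains every cut point, makes the measure finite
    have := hatomless (τ b)
    set μ := (v (τ b)).restrict (Icc 0 1)
    have : IsFiniteMeasure μ := isFiniteMeasure_restrict.2 (hfin _)
    calc ENNReal.ofReal B ≤ μ (Ioo (c₀ b.castSucc) (c₀ b.succ)) :=
          le_measure_Ioo_of_tendsto (hlim_at _) (hlim_at _) (Eventually.of_forall fun k => ?_)
      _ ≤ v (τ b) (Ioo (c₀ b.castSucc) (c₀ b.succ)) := Measure.restrict_apply_le _ _
    rw [Measure.restrict_eq_self _ (Ioo_subset_Icc_self.trans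
      (Icc_subset_Icc (hcut _ _).1 (hcut _ _).2)), ← hστ k]
    exact hval (φ k) b

theorem mem_feas_iff_of_card_eq {m : ℕ} (hm : S.card = m) {a : ℝ} :
    a ∈ Feas n v B S ↔ a ∈ Icc (0 : ℝ) 1 ∧
      ∃ (c : Fin (m + 1) → ℝ) (σ : Fin m ≃ {i // i ∈ S}),
        Monotone c ∧ c 0 = 0 ∧ c (Fin.last m) = a ∧
        ∀ b : Fin m, ENNReal.ofReal B ≤ v (σ b) (Ioo (c b.castSucc) (c b.succ)) := by
  subst hm
  rfl

theorem one_mem_feas_univ_iff :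
    (1 : ℝ) ∈ Feas n v B Finset.univ ↔
      ∃ (x : Fin (n + 1) → ℝ) (π : Equiv.Perm (Fin n)),
        Monotone x ∧ x 0 = 0 ∧ x (Fin.last n) = 1 ∧
        ∀ i : Fin n, ENNReal.ofReal B ≤
          v i (Ioo (x (π.symm i).castSucc) (x (π.symm i).succ)) := by
  let e : {i // i ∈ (Finset.univ : Finset (Fin n))} ≃ Fin n :=
    Equiv.subtypeUnivEquiv Finset.mem_univ
  rw [mem_feas_iff_of_card_eq (Finset.card_fin n)]
  constructor
  · rintro ⟨-, x, σ, hx, hx0, hx1, hval⟩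
    exact ⟨x, σ.trans e, hx, hx0, hx1, fun i => by simpa [e] using hval (σ.symm (e.symm i))⟩
  · rintro ⟨x, π, hx, hx0, hx1, hval⟩
    exact ⟨right_mem_Icc.2 zero_le_one, x, π.trans e.symm, hx, hx0, hx1,
      fun b => by simpa [e] using hval (π b)⟩

end Feas

theorem stmt_6_general (n : ℕ) (hn : 0 < n) (v : Fin n → Measure ℝ)
    (hatomless : ∀ i, NoAtoms (v i))
    (hprob : ∀ i, v i (Icc 0 1) = 1)
    (B : ℝ) :
    (∀ S : Finset (Fin n), S.Nonempty →
      (∀ a ∈ Feas n v B S, ∀ a', a ≤ a' → a' ≤ 1 → a' ∈ Feas n v B S) ∧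
      ((Feas n v B S).Nonempty → sInf (Feas n v B S) ∈ Feas n v B S)) ∧
    ((∃ (x : Fin (n + 1) → ℝ) (π : Equiv.Perm (Fin n)),
        Monotone x ∧ x 0 = 0 ∧ x (Fin.last n) = 1 ∧
        ∀ i : Fin n, ENNReal.ofReal B ≤
          v i (Ioo (x (π.symm i).castSucc) (x (π.symm i).succ)))
      ↔ (Feas n v B Finset.univ).Nonempty) := by
  have hfin : ∀ i, v i (Icc 0 1) ≠ ∞ := fun i => (hprob i).trans_ne one_ne_top
  refine ⟨fun S hS => ⟨fun a ha a' h h' => mem_feas_of_le hS ha h h', fun hne =>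
    (isClosed_feas hatomless hfin).csInf_mem hne ⟨0, fun a ha => ha.1.1⟩⟩, ?_⟩
  rw [← one_mem_feas_univ_iff]
  have huniv : (Finset.univ : Finset (Fin n)).Nonempty := Finset.univ_nonempty_iff.2 ⟨⟨0, hn⟩⟩
  exact ⟨fun h => ⟨1, h⟩, fun ⟨a, ha⟩ => mem_feas_of_le huniv ha ha.1.2 le_rfl⟩

/-- `F(S)` is upward closed in `[0,1]`, its infimum (when nonempty)
is attained, and a connected division of `[0,1]` with egalitarian welfare at
least `B` exists iff `F({1,…,n})` is nonempty (Theorem 5). -/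
theorem stmt_6 (n : ℕ) (hn : 0 < n) (v : Fin n → Measure ℝ)
    (hatomless : ∀ i, NoAtoms (v i))
    (hprob : ∀ i, v i (Icc 0 1) = 1) (hsupp : ∀ i, v i (Icc (0 : ℝ) 1)ᶜ = 0)
    (B : ℝ) (hB0 : 0 < B) (hB1 : B ≤ 1) :
    (∀ S : Finset (Fin n), S.Nonempty →
      (∀ a ∈ Feas n v B S, ∀ a', a ≤ a' → a' ≤ 1 → a' ∈ Feas n v B S) ∧
      ((Feas n v B S).Nonempty → sInf (Feas n v B S) ∈ Feas n v B S)) ∧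
    ((∃ (x : Fin (n + 1) → ℝ) (π : Equiv.Perm (Fin n)),
        Monotone x ∧ x 0 = 0 ∧ x (Fin.last n) = 1 ∧
        ∀ i : Fin n, ENNReal.ofReal B ≤
          v i (Ioo (x (π.symm i).castSucc) (x (π.symm i).succ)))
      ↔ (Feas n v B Finset.univ).Nonempty) :=
  stmt_6_general n hn v hatomless hprob B
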